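/- If two domino tatami coverings of the 8×8 grid agree on all dominoes intersecting the top row, then the coverings are equal. -/

import Mathlib

/-- Two cells of `ℤ × ℤ` are edge-adjacent (L1-distance 1). -/
def Adj (a b : ℤ × ℤ) : Prop := (a.1 - b.1).natAbs + (a.2 - b.2).natAbs = 1

instance (a b : ℤ × ℤ) : Decidable (Adj a b) := by unfold Adj; infer_instance

/-- A domino: a pair of edge-adjacent cells. -/
def IsDomino (d : Finset (ℤ × ℤ)) : Prop := ∃ a b : ℤ × ℤ, Adj a b ∧ d = {a, b}

/-- `C` is a partition of the region `S` into pieces. -/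
def IsPartition (S : Finset (ℤ × ℤ)) (C : Finset (Finset (ℤ × ℤ))) : Prop :=
  (∀ d ∈ C, d ⊆ S) ∧ ∀ c ∈ S, ∃! d, d ∈ C ∧ c ∈ d

/-- The four cells incident to the lattice point at the upper-right corner of cell `p`. -/
def Block (p : ℤ × ℤ) : Finset (ℤ × ℤ) :=
  {(p.1, p.2), (p.1 + 1, p.2), (p.1, p.2 + 1), (p.1 + 1, p.2 + 1)}

/-- Tatami condition: around each interior lattice point, some piece covers
    two of the four incident cells (so no four pieces meet there). -/
def TatamiCond (S : Finset (ℤ × ℤ)) (C : Finset (Finset (ℤ × ℤ))) : Prop :=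
  ∀ p : ℤ × ℤ, Block p ⊆ S → ∃ d ∈ C, 2 ≤ (d ∩ Block p).card

/-- A domino tatami covering of region `S`. -/
def DominoTatami (S : Finset (ℤ × ℤ)) (C : Finset (Finset (ℤ × ℤ))) : Prop :=
  IsPartition S C ∧ (∀ d ∈ C, IsDomino d) ∧ TatamiCond S C

/-- The `m × n` grid `{0,…,m−1} × {0,…,n−1}`. -/
noncomputable def grid (m n : ℕ) : Finset (ℤ × ℤ) := Finset.Ico 0 (m : ℤ) ×ˢ Finset.Ico 0 (n : ℤ)


namespace TatamiAux

/-! ### basic numeric helpers -/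

def bitd (m x : ℕ) : ℕ := m / 2^x % 2

open Classical in
noncomputable def ind (p : Prop) : ℕ := if p then 1 else 0

lemma ind_le_one (p : Prop) : ind p ≤ 1 := by unfold ind; split <;> simp
lemma ind_of {p : Prop} (h : p) : ind p = 1 := by unfold ind; split <;> simp_all
lemma ind_not {p : Prop} (h : ¬ p) : ind p = 0 := by unfold ind; split <;> simp_all
lemma ind_congr {p q : Prop} (h : p ↔ q) : ind p = ind q := by unfold ind; split <;> split <;> simp_all
lemma ind_inj {p q : Prop} (h : ind p = ind q) : p ↔ q := by
  unfold ind at h; split at h <;> split at h <;> simp_all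

def mask8 (e : ℕ → ℕ) : ℕ :=
  e 0 + 2*e 1 + 4*e 2 + 8*e 3 + 16*e 4 + 32*e 5 + 64*e 6 + 128*e 7
def mask7 (e : ℕ → ℕ) : ℕ :=
  e 0 + 2*e 1 + 4*e 2 + 8*e 3 + 16*e 4 + 32*e 5 + 64*e 6

lemma mask8_lt {e : ℕ → ℕ} (he : ∀ i, e i ≤ 1) : mask8 e < 256 := by
  have h0 := he 0; have h1 := he 1; have h2 := he 2; have h3 := he 3
  have h4 := he 4; have h5 := he 5; have h6 := he 6; have h7 := he 7
  unfold mask8; omega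

lemma mask7_lt {e : ℕ → ℕ} (he : ∀ i, e i ≤ 1) : mask7 e < 128 := by
  have h0 := he 0; have h1 := he 1; have h2 := he 2; have h3 := he 3
  have h4 := he 4; have h5 := he 5; have h6 := he 6
  unfold mask7; omega

lemma mask8_bitd {e : ℕ → ℕ} (he : ∀ i, e i ≤ 1) {x : ℕ} (hx : x < 8) :
    bitd (mask8 e) x = e x := by
  have h0 := he 0; have h1 := he 1; have h2 := he 2; have h3 := he 3
  have h4 := he 4; have h5 := he 5; have h6 := he 6; have h7 := he 7
  unfold mask8 bitd
  interval_cases x <;> norm_num <;> omega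

lemma mask7_bitd {e : ℕ → ℕ} (he : ∀ i, e i ≤ 1) {x : ℕ} (hx : x < 7) :
    bitd (mask7 e) x = e x := by
  have h0 := he 0; have h1 := he 1; have h2 := he 2; have h3 := he 3
  have h4 := he 4; have h5 := he 5; have h6 := he 6
  unfold mask7 bitd
  interval_cases x <;> norm_num <;> omega

lemma mask7_bitd7 {e : ℕ → ℕ} (he : ∀ i, e i ≤ 1) : bitd (mask7 e) 7 = 0 := by
  have := mask7_lt he; unfold bitd; norm_num; omega

lemma mask7_two_bitd {e : ℕ → ℕ} (he : ∀ i, e i ≤ 1) {x : ℕ} (hx : x < 8) :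
    bitd (2 * mask7 e) x = if x = 0 then 0 else e (x-1) := by
  have h0 := he 0; have h1 := he 1; have h2 := he 2; have h3 := he 3
  have h4 := he 4; have h5 := he 5; have h6 := he 6
  unfold mask7 bitd
  interval_cases x <;> norm_num <;> omega

lemma digits_lt {m : ℕ} (hm : m < 256) :
    m = bitd m 0 + 2*bitd m 1 + 4*bitd m 2 + 8*bitd m 3 + 16*bitd m 4 +
        32*bitd m 5 + 64*bitd m 6 + 128*bitd m 7 := by
  unfold bitd; norm_num; omega

lemma mask8_zero {e : ℕ → ℕ} (he : ∀ i, e i = 0) : mask8 e = 0 := by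
  unfold mask8; rw [he 0, he 1, he 2, he 3, he 4, he 5, he 6, he 7]

/-! ### the matching relation -/

def Mrel (C : Finset (Finset (ℤ × ℤ))) (a b : ℤ × ℤ) : Prop :=
  a ≠ b ∧ ∃ d ∈ C, a ∈ d ∧ b ∈ d

lemma adj_symm {a b : ℤ × ℤ} (h : Adj a b) : Adj b a := by unfold Adj at *; omega

lemma adj_ne {a b : ℤ × ℤ} (h : Adj a b) : a ≠ b := by
  intro he; rw [he] at h; unfold Adj at h; simp at h

lemma adj_cases {a b : ℤ × ℤ} (h : Adj a b) :
    b = (a.1+1, a.2) ∨ b = (a.1-1, a.2) ∨ b = (a.1, a.2+1) ∨ b = (a.1, a.2-1) := by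
  obtain ⟨ax, ay⟩ := a; obtain ⟨bx, by'⟩ := b
  unfold Adj at h
  simp only [Prod.mk.injEq] at *
  omega

lemma mem_grid {p : ℤ × ℤ} : p ∈ grid 8 8 ↔ 0 ≤ p.1 ∧ p.1 < 8 ∧ 0 ≤ p.2 ∧ p.2 < 8 := by
  obtain ⟨px, py⟩ := p
  simp [grid, Finset.mem_product, Finset.mem_Ico, and_assoc]

lemma mrel_symm {C} {a b : ℤ × ℤ} (h : Mrel C a b) : Mrel C b a := by
  obtain ⟨hne, d, h1, h2, h3⟩ := h; exact ⟨hne.symm, d, h1, h3, h2⟩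

variable {C : Finset (Finset (ℤ × ℤ))}

lemma pair_eq {d : Finset (ℤ × ℤ)} (hd : IsDomino d) {a b : ℤ × ℤ}
    (ha : a ∈ d) (hb : b ∈ d) (hab : a ≠ b) : d = {a, b} ∧ Adj a b := by
  obtain ⟨p, q, hpq, rfl⟩ := hd
  simp only [Finset.mem_insert, Finset.mem_singleton] at ha hb
  rcases ha with rfl | rfl <;> rcases hb with rfl | rfl
  · exact absurd rfl hab
  · exact ⟨rfl, hpq⟩
  · exact ⟨Finset.pair_comm _ _, adj_symm hpq⟩
  · exact absurd rfl hab

lemma mrel_pair (hC : DominoTatami (grid 8 8) C) {a b : ℤ × ℤ} (h : Mrel C a b) :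
    {a, b} ∈ C ∧ Adj a b ∧ a ∈ grid 8 8 ∧ b ∈ grid 8 8 := by
  obtain ⟨hne, d, hdC, ha, hb⟩ := h
  obtain ⟨hdd, hadj⟩ := pair_eq (hC.2.1 d hdC) ha hb hne
  exact ⟨hdd ▸ hdC, hadj, hC.1.1 d hdC ha, hC.1.1 d hdC hb⟩

lemma mrel_unique (hC : DominoTatami (grid 8 8) C) {a b b' : ℤ × ℤ}
    (h : Mrel C a b) (h' : Mrel C a b') : b = b' := by
  obtain ⟨hne, d, hdC, ha, hb⟩ := h
  obtain ⟨hne', d', hdC', ha', hb'⟩ := h'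
  have hag : a ∈ grid 8 8 := hC.1.1 d hdC ha
  obtain ⟨u, hu, huniq⟩ := hC.1.2 a hag
  have e1 : d = u := huniq d ⟨hdC, ha⟩
  have e2 : d' = u := huniq d' ⟨hdC', ha'⟩
  subst e1; rw [e2] at hb'
  obtain ⟨hdd, _⟩ := pair_eq (hC.2.1 d hdC) ha hb hne
  rw [hdd] at hb'
  simp only [Finset.mem_insert, Finset.mem_singleton] at hb'
  rcases hb' with rfl | rfl
  · exact absurd rfl hne'
  · rfl

lemma mrel_exists (hC : DominoTatami (grid 8 8) C) {c : ℤ × ℤ} (hc : c ∈ grid 8 8) :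
    ∃ b, Mrel C c b := by
  obtain ⟨d, ⟨hdC, hcd⟩, _⟩ := hC.1.2 c hc
  obtain ⟨p, q, hpq, rfl⟩ := hC.2.1 d hdC
  have hne := adj_ne hpq
  simp only [Finset.mem_insert, Finset.mem_singleton] at hcd
  rcases hcd with rfl | rfl
  · exact ⟨q, hne, _, hdC, by simp, by simp⟩
  · exact ⟨p, (adj_ne (adj_symm hpq)), _, hdC, by simp, by simp⟩

lemma mrel_out (hC : DominoTatami (grid 8 8) C) {a b : ℤ × ℤ}
    (hb : b ∉ grid 8 8) : ¬ Mrel C a b := fun h => hb (mrel_pair hC h).2.2.2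

lemma mrel_out' (hC : DominoTatami (grid 8 8) C) {a b : ℤ × ℤ}
    (ha : a ∉ grid 8 8) : ¬ Mrel C a b := fun h => ha (mrel_pair hC h).2.2.1

lemma adj_cases' {ax ay bx by' : ℤ} (h : Adj (ax,ay) (bx,by')) :
    (bx = ax+1 ∧ by' = ay) ∨ (bx = ax-1 ∧ by' = ay) ∨ (bx = ax ∧ by' = ay+1) ∨ (bx = ax ∧ by' = ay-1) := by
  have h' : (ax - bx).natAbs + (ay - by').natAbs = 1 := h
  omega

/-- exactly one of the four neighbours is the partner -/
lemma cell_exact (hC : DominoTatami (grid 8 8) C) {x y : ℤ}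
    (hx : 0 ≤ x ∧ x < 8) (hy : 0 ≤ y ∧ y < 8) :
    ind (Mrel C (x,y) (x,y+1)) + ind (Mrel C (x,y) (x,y-1)) +
    ind (Mrel C (x,y) (x+1,y)) + ind (Mrel C (x,y) (x-1,y)) = 1 := by
  have hcg : ((x,y) : ℤ × ℤ) ∈ grid 8 8 := by
    rw [mem_grid]; exact ⟨hx.1, hx.2, hy.1, hy.2⟩
  obtain ⟨b, hb⟩ := mrel_exists hC hcg
  obtain ⟨bx, by'⟩ := b
  have hadj := (mrel_pair hC hb).2.1
  have key : ∀ p : ℤ × ℤ, p ≠ (bx, by') → ind (Mrel C (x,y) p) = 0 := by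
    intro p hp
    exact ind_not (fun h => hp (mrel_unique hC h hb))
  rcases adj_cases' hadj with ⟨h1, h2⟩ | ⟨h1, h2⟩ | ⟨h1, h2⟩ | ⟨h1, h2⟩ <;> rw [h1, h2] at hb key
  · rw [ind_of hb,
      key (x, y+1) (by intro he; injection he with e1 e2; omega),
      key (x, y-1) (by intro he; injection he with e1 e2; omega),
      key (x-1, y) (by intro he; injection he with e1 e2; omega)]
  · rw [ind_of hb,
      key (x, y+1) (by intro he; injection he with e1 e2; omega),
      key (x, y-1) (by intro he; injection he with e1 e2; omega),
      key (x+1, y) (by intro he; injection he with e1 e2; omega)]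
  · rw [ind_of hb,
      key (x, y-1) (by intro he; injection he with e1 e2; omega),
      key (x+1, y) (by intro he; injection he with e1 e2; omega),
      key (x-1, y) (by intro he; injection he with e1 e2; omega)]
  · rw [ind_of hb,
      key (x, y+1) (by intro he; injection he with e1 e2; omega),
      key (x+1, y) (by intro he; injection he with e1 e2; omega),
      key (x-1, y) (by intro he; injection he with e1 e2; omega)]

/-- tatami: one of the four dominoes inside each interior 2x2 block is present -/
lemma point_cover (hC : DominoTatami (grid 8 8) C) {x y : ℤ}
    (hx : 0 ≤ x ∧ x < 7) (hy : 0 ≤ y ∧ y < 7) :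
    Mrel C (x,y) (x+1,y) ∨ Mrel C (x,y+1) (x+1,y+1) ∨
    Mrel C (x,y) (x,y+1) ∨ Mrel C (x+1,y) (x+1,y+1) := by
  have hb : Block (x,y) ⊆ grid 8 8 := by
    intro p hp
    simp only [Block, Finset.mem_insert, Finset.mem_singleton] at hp
    rcases hp with rfl | rfl | rfl | rfl <;> (rw [mem_grid]; constructor <;> simp <;> omega)
  obtain ⟨d, hdC, hcard⟩ := hC.2.2 (x,y) hb
  obtain ⟨p, q, hpq, rfl⟩ := hC.2.1 d hdC
  have hne := adj_ne hpq
  have hcp : ({p, q} : Finset (ℤ × ℤ)).card = 2 := Finset.card_pair hne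
  have hsub : ({p, q} : Finset (ℤ × ℤ)) ∩ Block (x,y) ⊆ {p, q} := Finset.inter_subset_left
  have heq : ({p, q} : Finset (ℤ × ℤ)) ∩ Block (x,y) = {p, q} :=
    Finset.eq_of_subset_of_card_le hsub (by omega)
  have hpB : p ∈ Block (x,y) := by
    have : p ∈ ({p, q} : Finset (ℤ × ℤ)) ∩ Block (x,y) := by rw [heq]; simp
    exact (Finset.mem_inter.mp this).2
  have hqB : q ∈ Block (x,y) := by
    have : q ∈ ({p, q} : Finset (ℤ × ℤ)) ∩ Block (x,y) := by rw [heq]; simp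
    exact (Finset.mem_inter.mp this).2
  have hM : Mrel C p q := ⟨hne, {p,q}, hdC, by simp, by simp⟩
  simp only [Block, Finset.mem_insert, Finset.mem_singleton] at hpB hqB
  rcases hpB with rfl | rfl | rfl | rfl <;> rcases hqB with rfl | rfl | rfl | rfl <;>
    first
      | exact absurd rfl hne
      | exact absurd (show ((x,y).1 - ((x,y).1+1)).natAbs + (((x,y).2) - ((x,y).2+1)).natAbs = 1 from hpq) (by omega)
      | exact absurd (show (((x,y).1+1) - (x,y).1).natAbs + (((x,y).2) - ((x,y).2+1)).natAbs = 1 from hpq) (by omega)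
      | exact absurd (show ((x,y).1 - ((x,y).1+1)).natAbs + (((x,y).2+1) - ((x,y).2)).natAbs = 1 from hpq) (by omega)
      | exact absurd (show (((x,y).1+1) - (x,y).1).natAbs + (((x,y).2+1) - ((x,y).2)).natAbs = 1 from hpq) (by omega)
      | exact Or.inl hM
      | exact Or.inl (mrel_symm hM)
      | exact Or.inr (Or.inl hM)
      | exact Or.inr (Or.inl (mrel_symm hM))
      | exact Or.inr (Or.inr (Or.inl hM))
      | exact Or.inr (Or.inr (Or.inl (mrel_symm hM)))
      | exact Or.inr (Or.inr (Or.inr hM))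
      | exact Or.inr (Or.inr (Or.inr (mrel_symm hM)))

/-! ### masks -/

noncomputable def DmM (M : ℤ × ℤ → ℤ × ℤ → Prop) (y : ℤ) : ℕ :=
  mask8 fun x => ind (M ((x:ℤ), y) ((x:ℤ), y-1))
noncomputable def HmM (M : ℤ × ℤ → ℤ × ℤ → Prop) (y : ℤ) : ℕ :=
  mask7 fun x => ind (M ((x:ℤ), y) ((x:ℤ)+1, y))

lemma DmM_lt (M) (y : ℤ) : DmM M y < 256 := mask8_lt (fun _ => ind_le_one _)
lemma HmM_lt (M) (y : ℤ) : HmM M y < 128 := mask7_lt (fun _ => ind_le_one _)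

lemma DmM_bitd (M) (y : ℤ) {x : ℕ} (hx : x < 8) :
    bitd (DmM M y) x = ind (M ((x:ℤ), y) ((x:ℤ), y-1)) :=
  mask8_bitd (fun _ => ind_le_one _) hx
lemma HmM_bitd (M) (y : ℤ) {x : ℕ} (hx : x < 7) :
    bitd (HmM M y) x = ind (M ((x:ℤ), y) ((x:ℤ)+1, y)) :=
  mask7_bitd (fun _ => ind_le_one _) hx
lemma HmM_bitd7 (M) (y : ℤ) : bitd (HmM M y) 7 = 0 :=
  mask7_bitd7 (fun _ => ind_le_one _)
lemma HmM_two_bitd (M) (y : ℤ) {x : ℕ} (hx : x < 8) :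
    bitd (2 * HmM M y) x
      = if x = 0 then 0 else ind (M (((x-1 : ℕ):ℤ), y) (((x-1 : ℕ):ℤ)+1, y)) :=
  mask7_two_bitd (fun _ => ind_le_one _) hx

def pB (u d h : ℕ) : Bool := (List.range 8).all fun x => bitd u x + bitd d x + bitd h x + bitd (2*h) x == 1
def tB (g h d : ℕ) : Bool := (List.range 7).all fun x => bitd g x + bitd h x + bitd d x + bitd d (x+1) != 0

lemma pB_iff {u d h : ℕ} : pB u d h = true ↔
    ∀ x < 8, bitd u x + bitd d x + bitd h x + bitd (2*h) x = 1 := by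
  simp [pB, List.all_eq_true, List.mem_range]

lemma tB_iff {g h d : ℕ} : tB g h d = true ↔
    ∀ x < 7, bitd g x + bitd h x + bitd d x + bitd d (x+1) ≠ 0 := by
  simp [tB, List.all_eq_true, List.mem_range]

lemma row_pB (hC : DominoTatami (grid 8 8) C) {y : ℤ} (hy : 0 ≤ y ∧ y < 8) :
    pB (DmM (Mrel C) (y+1)) (DmM (Mrel C) y) (HmM (Mrel C) y) = true := by
  rw [pB_iff]
  intro x hx
  have hU := DmM_bitd (Mrel C) (y+1) hx
  have hD := DmM_bitd (Mrel C) y hx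
  have h2H := HmM_two_bitd (Mrel C) y hx
  have hup : ind (Mrel C ((x:ℤ), y+1) ((x:ℤ), y+1-1)) = ind (Mrel C ((x:ℤ), y) ((x:ℤ), y+1)) := by
    rw [show y+1-1 = y from by ring]
    exact ind_congr ⟨mrel_symm, mrel_symm⟩
  have hsum := cell_exact hC (x := (x:ℤ)) (y := y) ⟨by omega, by omega⟩ hy
  by_cases hx0 : x = 0
  · subst hx0
    rw [if_pos rfl] at h2H
    have hH := HmM_bitd (Mrel C) y (show 0 < 7 by norm_num)
    have hleft : ind (Mrel C (((0:ℕ):ℤ), y) ((((0:ℕ):ℤ))-1, y)) = 0 :=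
      ind_not (mrel_out hC (by rw [mem_grid]; push_neg; intro h1 h2; omega))
    omega
  · by_cases hx7 : x = 7
    · subst hx7
      have hH7 := HmM_bitd7 (Mrel C) y
      rw [if_neg (by norm_num)] at h2H
      have hc : (((7-1 : ℕ)):ℤ) = (7:ℕ) - (1:ℤ) := by norm_num
      have hlft : ind (Mrel C (((7-1 : ℕ):ℤ), y) ((((7-1 : ℕ)):ℤ)+1, y))
          = ind (Mrel C (((7:ℕ):ℤ)-1, y) ((((7:ℕ)):ℤ), y)) := by
        rw [show (((7-1 : ℕ)):ℤ) = ((7:ℕ):ℤ)-1 from by norm_num,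
            show ((7:ℕ):ℤ)-1+1 = ((7:ℕ):ℤ) from by ring]
      have hleftsym : ind (Mrel C (((7:ℕ):ℤ)-1, y) ((((7:ℕ)):ℤ), y))
          = ind (Mrel C (((7:ℕ):ℤ), y) ((((7:ℕ)):ℤ)-1, y)) := ind_congr ⟨mrel_symm, mrel_symm⟩
      have hright : ind (Mrel C (((7:ℕ):ℤ), y) ((((7:ℕ):ℤ))+1, y)) = 0 :=
        ind_not (mrel_out hC (by rw [mem_grid]; push_neg; intro h1 h2; push_cast; omega))
      omega
    · -- middle: 1 ≤ x ≤ 6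
      have hH := HmM_bitd (Mrel C) y (show x < 7 by omega)
      rw [if_neg hx0] at h2H
      have hcast : (((x-1 : ℕ)):ℤ) = (x:ℤ)-1 := by omega
      have hlft : ind (Mrel C (((x-1 : ℕ):ℤ), y) ((((x-1 : ℕ)):ℤ)+1, y))
          = ind (Mrel C ((x:ℤ)-1, y) (((x:ℤ)), y)) := by
        rw [hcast, show (x:ℤ)-1+1 = (x:ℤ) from by ring]
      have hleftsym : ind (Mrel C ((x:ℤ)-1, y) (((x:ℤ)), y))
          = ind (Mrel C ((x:ℤ), y) (((x:ℤ))-1, y)) := ind_congr ⟨mrel_symm, mrel_symm⟩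
      omega

lemma row_tB (hC : DominoTatami (grid 8 8) C) {y : ℤ} (hy : 0 ≤ y ∧ y < 7) :
    tB (HmM (Mrel C) y) (HmM (Mrel C) (y+1)) (DmM (Mrel C) (y+1)) = true := by
  rw [tB_iff]
  intro x hx
  have hg := HmM_bitd (Mrel C) y hx
  have hh := HmM_bitd (Mrel C) (y+1) hx
  have hd := DmM_bitd (Mrel C) (y+1) (show x < 8 by omega)
  have hd2 := DmM_bitd (Mrel C) (y+1) (show x+1 < 8 by omega)
  have hdup : ind (Mrel C ((x:ℤ), y+1) ((x:ℤ), y+1-1)) = ind (Mrel C ((x:ℤ), y) ((x:ℤ), y+1)) := by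
    rw [show y+1-1 = y from by ring]; exact ind_congr ⟨mrel_symm, mrel_symm⟩
  have hcast : (((x+1 : ℕ)):ℤ) = (x:ℤ)+1 := by omega
  have hd2' : ind (Mrel C ((((x+1 : ℕ)):ℤ), y+1) (((((x+1 : ℕ)):ℤ)), y+1-1))
      = ind (Mrel C ((x:ℤ)+1, y) (((x:ℤ)+1), y+1)) := by
    rw [hcast, show y+1-1 = y from by ring]; exact ind_congr ⟨mrel_symm, mrel_symm⟩
  rcases point_cover hC (x := (x:ℤ)) (y := y) ⟨by omega, by omega⟩ hy with hc | hc | hc | hc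
  · have := ind_of hc; omega
  · have := ind_of hc; omega
  · have := ind_of hc; omega
  · have := ind_of hc; omega

def L0 : List Nat := [0, 256, 512, 1024, 1280, 2048, 2304, 2560, 4096, 4352, 4608, 5120, 5376, 8192, 8448, 8704, 9216, 9472, 10240, 10496, 10752, 16384, 16640, 16896, 17408, 17664, 18432, 18688, 18944, 20480, 20736, 20992, 21504, 21760]
def L1 : List Nat := [36, 39, 51, 57, 60, 63, 147, 153, 156, 159, 201, 204, 207, 228, 231, 243, 249, 252, 255, 292, 316, 412, 460, 484, 508, 560, 569, 656, 665, 713, 752, 761, 1057, 1075, 1171, 1249, 1267, 2084, 2087, 2243, 2276, 2279, 2340, 2532, 2752, 4228, 4231, 4297, 4300, 4303, 4484, 4556, 4809, 5249, 8201, 8204, 8207, 8339, 8345, 8348, 8351, 8460, 8604, 8713, 8848, 8857, 9363, 10243, 10752, 16420, 16423, 16435, 16441, 16444, 16447, 16676, 16700, 16944, 16953, 17441, 17459, 18468, 18471, 18724]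
def L2 : List Nat := [75, 105, 150, 210, 219, 364, 584, 617, 728, 1171, 1234, 1424, 2114, 2150, 4171, 4297, 4484, 4556, 4680, 4809, 5249, 5315, 8210, 8219, 8342, 8728, 9234, 9363, 9616, 16438, 16676, 17441, 17459, 17712, 18724, 20489, 20748, 21001]
def L3 : List Nat := [165, 436, 584, 617, 1201, 2114, 2213, 2656, 4237, 4680, 8210, 8342, 8728, 9234, 9616, 10246, 10628, 16429, 18724, 18977, 21001]
def L4 : List Nat := [90, 165, 1201, 2213, 4237, 4680, 5186, 9234, 9616, 21001]
def L5 : List Nat := [90, 2213, 5186, 10881]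
def L6 : List Nat := [2213, 5186, 10881, 21760]
def L7 : List Nat := [5186, 10752, 10881, 21760]
def A0 : List Nat := [10752, 21760]
def A1 : List Nat := [5249, 10752]
def A2 : List Nat := [2114, 5249]
def A3 : List Nat := [165, 2114]
def A4 : List Nat := [90, 2213]
def A5 : List Nat := [2213, 5186]
def A6 : List Nat := [5186, 10881]
def A7 : List Nat := [10881, 21760]


def stepOK (Lp Lc : List ℕ) : Bool :=
  Lp.all fun s =>
    !(pB (255 - s % 256 - 3 * (s / 256)) (s % 256) (s / 256)) ||
      ((List.range 128).all fun h =>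
        !(pB (255 - (255 - s % 256 - 3 * (s / 256)) - 3*h) (255 - s % 256 - 3 * (s / 256)) h
           && tB (s / 256) h (255 - s % 256 - 3 * (s / 256))) ||
        Lc.contains (h*256 + (255 - s % 256 - 3 * (s / 256))))

def downOK (Ac Lp Ap : List ℕ) : Bool :=
  Ac.all fun s =>
    (List.range 128).all fun h1 =>
      !(pB (s % 256) (255 - s % 256 - 3*h1) h1 && tB h1 (s / 256) (s % 256)
          && Lp.contains (h1*256 + (255 - s % 256 - 3*h1))) ||
      (Ap.contains (h1*256 + (255 - s % 256 - 3*h1)) &&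
        ((List.range 128).all fun h2 =>
          !(pB (s % 256) (255 - s % 256 - 3*h2) h2 && tB h2 (s / 256) (s % 256)
              && Lp.contains (h2*256 + (255 - s % 256 - 3*h2))) ||
          (h2 == h1)))

theorem chk_base : ((List.range 128).all
    (fun h => !(pB (255 - 3*h) 0 h) || L0.contains (h*256 + 0))) = true := by decide
theorem chk1 : stepOK L0 L1 = true := by decide
theorem chk2 : stepOK L1 L2 = true := by decide
theorem chk3 : stepOK L2 L3 = true := by decide
theorem chk4 : stepOK L3 L4 = true := by decide
theorem chk5 : stepOK L4 L5 = true := by decide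
theorem chk6 : stepOK L5 L6 = true := by decide
theorem chk7 : stepOK L6 L7 = true := by decide
theorem chk_top : (L7.all fun s => !(pB 0 (s % 256) (s / 256)) || A7.contains s) = true := by decide
theorem chkD7 : downOK A7 L6 A6 = true := by decide
theorem chkD6 : downOK A6 L5 A5 = true := by decide
theorem chkD5 : downOK A5 L4 A4 = true := by decide
theorem chkD4 : downOK A4 L3 A3 = true := by decide
theorem chkD3 : downOK A3 L2 A2 = true := by decide
theorem chkD2 : downOK A2 L1 A1 = true := by decide
theorem chkD1 : downOK A1 L0 A0 = true := by decide

lemma mem_of_contains {l : List ℕ} {x : ℕ} (h : l.contains x = true) : x ∈ l := by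
  simpa using h
lemma contains_of_mem {l : List ℕ} {x : ℕ} (h : x ∈ l) : l.contains x = true := by
  simpa using h
lemma all_mem {l : List ℕ} {p : ℕ → Bool} (h : l.all p = true) {x : ℕ} (hx : x ∈ l) :
    p x = true := List.all_eq_true.mp h x hx
lemma all_range {n : ℕ} {p : ℕ → Bool} (h : (List.range n).all p = true) {x : ℕ} (hx : x < n) :
    p x = true := List.all_eq_true.mp h x (List.mem_range.mpr hx)

lemma pB_sum {u d h : ℕ} (hu : u < 256) (hd : d < 256) (hh : h < 128)
    (hp : pB u d h = true) : u + d + 3*h = 255 := by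
  rw [pB_iff] at hp
  have e0 := hp 0 (by norm_num); have e1 := hp 1 (by norm_num)
  have e2 := hp 2 (by norm_num); have e3 := hp 3 (by norm_num)
  have e4 := hp 4 (by norm_num); have e5 := hp 5 (by norm_num)
  have e6 := hp 6 (by norm_num); have e7 := hp 7 (by norm_num)
  have du := digits_lt hu
  have dd := digits_lt hd
  have dh := digits_lt (show h < 256 by omega)
  have d2h := digits_lt (show 2*h < 256 by omega)
  zify at du dd dh d2h e0 e1 e2 e3 e4 e5 e6 e7 ⊢
  linear_combination du + dd + dh + d2h + e0 + 2*e1 + 4*e2 + 8*e3 + 16*e4 + 32*e5 + 64*e6 + 128*e7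

lemma step_sound {Lp Lc : List ℕ} (hch : stepOK Lp Lc = true)
    {h2 d2 d h u : ℕ} (hm : h2*256 + d2 ∈ Lp) (hh2 : h2 < 128) (hd2 : d2 < 256)
    (hd : d < 256) (hh : h < 128) (hu : u < 256)
    (hp : pB d d2 h2 = true) (hq : pB u d h = true) (ht : tB h2 h d = true) :
    h*256 + d ∈ Lc := by
  have h1 := all_mem hch hm
  rw [show (h2*256 + d2) % 256 = d2 from by omega,
      show (h2*256 + d2) / 256 = h2 from by omega] at h1
  have ed : 255 - d2 - 3*h2 = d := by have := pB_sum hd hd2 hh2 hp; omega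
  rw [ed] at h1
  rw [hp] at h1
  simp only [Bool.not_true, Bool.false_or] at h1
  have h3 := all_range h1 hh
  have eu : 255 - d - 3*h = u := by have := pB_sum hu hd hh hq; omega
  rw [eu, hq, ht] at h3
  simp only [Bool.and_self, Bool.not_true, Bool.false_or] at h3
  exact mem_of_contains h3

lemma base_sound {h u : ℕ} (hh : h < 128) (hu : u < 256) (hp : pB u 0 h = true) :
    h*256 + 0 ∈ L0 := by
  have h1 := all_range chk_base hh
  have eu : 255 - 3*h = u := by have := pB_sum hu (by norm_num) hh hp; omega
  rw [eu, hp] at h1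
  simp only [Bool.not_true, Bool.false_or] at h1
  exact mem_of_contains h1

lemma top_sound {h d : ℕ} (hm : h*256 + d ∈ L7) (hh : h < 128) (hd : d < 256)
    (hp : pB 0 d h = true) : h*256 + d ∈ A7 := by
  have h1 := all_mem chk_top hm
  rw [show (h*256 + d) % 256 = d from by omega,
      show (h*256 + d) / 256 = h from by omega, hp] at h1
  simp only [Bool.not_true, Bool.false_or] at h1
  exact mem_of_contains h1

lemma down_sound {Ac Lp Ap : List ℕ} (hch : downOK Ac Lp Ap = true)
    {h d h1 d1 h2 d2 : ℕ} (hm : h*256 + d ∈ Ac) (hh : h < 128) (hd : d < 256)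
    (hh1 : h1 < 128) (hd1 : d1 < 256) (hh2 : h2 < 128) (hd2 : d2 < 256)
    (hp1 : pB d d1 h1 = true) (ht1 : tB h1 h d = true) (hm1 : h1*256 + d1 ∈ Lp)
    (hp2 : pB d d2 h2 = true) (ht2 : tB h2 h d = true) (hm2 : h2*256 + d2 ∈ Lp) :
    h1 = h2 ∧ d1 = d2 ∧ h1*256 + d1 ∈ Ap := by
  have hall := all_mem hch hm
  rw [show (h*256 + d) % 256 = d from by omega,
      show (h*256 + d) / 256 = h from by omega] at hall
  have e1 : 255 - d - 3*h1 = d1 := by have := pB_sum hd hd1 hh1 hp1; omega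
  have e2 : 255 - d - 3*h2 = d2 := by have := pB_sum hd hd2 hh2 hp2; omega
  have hA := all_range hall hh1
  rw [e1, hp1, ht1, contains_of_mem hm1] at hA
  simp only [Bool.and_self, Bool.not_true, Bool.false_or, Bool.and_eq_true] at hA
  obtain ⟨hApm, hinner⟩ := hA
  have hu := all_range hinner hh2
  rw [e2, hp2, ht2, contains_of_mem hm2] at hu
  simp only [Bool.and_self, Bool.not_true, Bool.false_or] at hu
  have : h2 = h1 := by simpa using hu
  subst this
  exact ⟨rfl, by omega, mem_of_contains hApm⟩

theorem engine (D1 H1 D2 H2 : ℕ → ℕ)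
    (bD1 : ∀ y, D1 y < 256) (bH1 : ∀ y, H1 y < 128)
    (bD2 : ∀ y, D2 y < 256) (bH2 : ∀ y, H2 y < 128)
    (hp1 : ∀ y < 8, pB (D1 (y+1)) (D1 y) (H1 y) = true)
    (ht1 : ∀ y < 7, tB (H1 y) (H1 (y+1)) (D1 (y+1)) = true)
    (hp2 : ∀ y < 8, pB (D2 (y+1)) (D2 y) (H2 y) = true)
    (ht2 : ∀ y < 7, tB (H2 y) (H2 (y+1)) (D2 (y+1)) = true)
    (h10 : D1 0 = 0) (h20 : D2 0 = 0) (h18 : D1 8 = 0) (h28 : D2 8 = 0)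
    (hH7 : H1 7 = H2 7) (hD7 : D1 7 = D2 7) :
    (∀ y ≤ 8, D1 y = D2 y) ∧ (∀ y ≤ 7, H1 y = H2 y) := by
  -- upward membership chains
  have m1_0 : H1 0 * 256 + D1 0 ∈ L0 := by
    rw [h10]; exact base_sound (bH1 0) (bD1 1) (by have := hp1 0 (by norm_num); rwa [h10] at this)
  have m1_1 : H1 1 * 256 + D1 1 ∈ L1 := step_sound chk1 m1_0 (bH1 0) (bD1 0) (bD1 1) (bH1 1) (bD1 2)
    (hp1 0 (by norm_num)) (hp1 1 (by norm_num)) (ht1 0 (by norm_num))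
  have m1_2 : H1 2 * 256 + D1 2 ∈ L2 := step_sound chk2 m1_1 (bH1 1) (bD1 1) (bD1 2) (bH1 2) (bD1 3)
    (hp1 1 (by norm_num)) (hp1 2 (by norm_num)) (ht1 1 (by norm_num))
  have m1_3 : H1 3 * 256 + D1 3 ∈ L3 := step_sound chk3 m1_2 (bH1 2) (bD1 2) (bD1 3) (bH1 3) (bD1 4)
    (hp1 2 (by norm_num)) (hp1 3 (by norm_num)) (ht1 2 (by norm_num))
  have m1_4 : H1 4 * 256 + D1 4 ∈ L4 := step_sound chk4 m1_3 (bH1 3) (bD1 3) (bD1 4) (bH1 4) (bD1 5)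
    (hp1 3 (by norm_num)) (hp1 4 (by norm_num)) (ht1 3 (by norm_num))
  have m1_5 : H1 5 * 256 + D1 5 ∈ L5 := step_sound chk5 m1_4 (bH1 4) (bD1 4) (bD1 5) (bH1 5) (bD1 6)
    (hp1 4 (by norm_num)) (hp1 5 (by norm_num)) (ht1 4 (by norm_num))
  have m1_6 : H1 6 * 256 + D1 6 ∈ L6 := step_sound chk6 m1_5 (bH1 5) (bD1 5) (bD1 6) (bH1 6) (bD1 7)
    (hp1 5 (by norm_num)) (hp1 6 (by norm_num)) (ht1 5 (by norm_num))
  have m1_7 : H1 7 * 256 + D1 7 ∈ L7 := step_sound chk7 m1_6 (bH1 6) (bD1 6) (bD1 7) (bH1 7) (bD1 8)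
    (hp1 6 (by norm_num)) (hp1 7 (by norm_num)) (ht1 6 (by norm_num))
  have m2_0 : H2 0 * 256 + D2 0 ∈ L0 := by
    rw [h20]; exact base_sound (bH2 0) (bD2 1) (by have := hp2 0 (by norm_num); rwa [h20] at this)
  have m2_1 : H2 1 * 256 + D2 1 ∈ L1 := step_sound chk1 m2_0 (bH2 0) (bD2 0) (bD2 1) (bH2 1) (bD2 2)
    (hp2 0 (by norm_num)) (hp2 1 (by norm_num)) (ht2 0 (by norm_num))
  have m2_2 : H2 2 * 256 + D2 2 ∈ L2 := step_sound chk2 m2_1 (bH2 1) (bD2 1) (bD2 2) (bH2 2) (bD2 3)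
    (hp2 1 (by norm_num)) (hp2 2 (by norm_num)) (ht2 1 (by norm_num))
  have m2_3 : H2 3 * 256 + D2 3 ∈ L3 := step_sound chk3 m2_2 (bH2 2) (bD2 2) (bD2 3) (bH2 3) (bD2 4)
    (hp2 2 (by norm_num)) (hp2 3 (by norm_num)) (ht2 2 (by norm_num))
  have m2_4 : H2 4 * 256 + D2 4 ∈ L4 := step_sound chk4 m2_3 (bH2 3) (bD2 3) (bD2 4) (bH2 4) (bD2 5)
    (hp2 3 (by norm_num)) (hp2 4 (by norm_num)) (ht2 3 (by norm_num))
  have m2_5 : H2 5 * 256 + D2 5 ∈ L5 := step_sound chk5 m2_4 (bH2 4) (bD2 4) (bD2 5) (bH2 5) (bD2 6)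
    (hp2 4 (by norm_num)) (hp2 5 (by norm_num)) (ht2 4 (by norm_num))
  have m2_6 : H2 6 * 256 + D2 6 ∈ L6 := step_sound chk6 m2_5 (bH2 5) (bD2 5) (bD2 6) (bH2 6) (bD2 7)
    (hp2 5 (by norm_num)) (hp2 6 (by norm_num)) (ht2 5 (by norm_num))
  -- top membership in A7
  have t7 : H1 7 * 256 + D1 7 ∈ A7 := top_sound m1_7 (bH1 7) (bD1 7)
    (by have := hp1 7 (by norm_num); rwa [h18] at this)
  -- downward chain
  have s7 : H1 7 * 256 + D1 7 ∈ A7 := t7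
  have hp2' : ∀ y < 8, pB (D1 (y+1)) (D2 y) (H2 y) = true → True := fun _ _ _ => trivial
  -- level 6
  have d6 := down_sound chkD7 s7 (bH1 7) (bD1 7) (bH1 6) (bD1 6) (bH2 6) (bD2 6)
    (hp1 6 (by norm_num)) (ht1 6 (by norm_num)) m1_6
    (by rw [hD7]; exact hp2 6 (by norm_num)) (by rw [hD7, hH7]; exact ht2 6 (by norm_num)) m2_6
  obtain ⟨eH6, eD6, a6⟩ := d6
  have d5 := down_sound chkD6 (by rw [eH6, eD6] at a6; rwa [← eH6, ← eD6] at a6) (bH1 6) (bD1 6)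
    (bH1 5) (bD1 5) (bH2 5) (bD2 5)
    (hp1 5 (by norm_num)) (ht1 5 (by norm_num)) m1_5
    (by rw [eD6]; exact hp2 5 (by norm_num)) (by rw [eD6, eH6]; exact ht2 5 (by norm_num)) m2_5
  obtain ⟨eH5, eD5, a5⟩ := d5
  have d4 := down_sound chkD5 a5 (bH1 5) (bD1 5) (bH1 4) (bD1 4) (bH2 4) (bD2 4)
    (hp1 4 (by norm_num)) (ht1 4 (by norm_num)) m1_4
    (by rw [eD5]; exact hp2 4 (by norm_num)) (by rw [eD5, eH5]; exact ht2 4 (by norm_num)) m2_4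
  obtain ⟨eH4, eD4, a4⟩ := d4
  have d3 := down_sound chkD4 a4 (bH1 4) (bD1 4) (bH1 3) (bD1 3) (bH2 3) (bD2 3)
    (hp1 3 (by norm_num)) (ht1 3 (by norm_num)) m1_3
    (by rw [eD4]; exact hp2 3 (by norm_num)) (by rw [eD4, eH4]; exact ht2 3 (by norm_num)) m2_3
  obtain ⟨eH3, eD3, a3⟩ := d3
  have d2 := down_sound chkD3 a3 (bH1 3) (bD1 3) (bH1 2) (bD1 2) (bH2 2) (bD2 2)
    (hp1 2 (by norm_num)) (ht1 2 (by norm_num)) m1_2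
    (by rw [eD3]; exact hp2 2 (by norm_num)) (by rw [eD3, eH3]; exact ht2 2 (by norm_num)) m2_2
  obtain ⟨eH2, eD2, a2⟩ := d2
  have d1 := down_sound chkD2 a2 (bH1 2) (bD1 2) (bH1 1) (bD1 1) (bH2 1) (bD2 1)
    (hp1 1 (by norm_num)) (ht1 1 (by norm_num)) m1_1
    (by rw [eD2]; exact hp2 1 (by norm_num)) (by rw [eD2, eH2]; exact ht2 1 (by norm_num)) m2_1
  obtain ⟨eH1, eD1, a1⟩ := d1
  have d0 := down_sound chkD1 a1 (bH1 1) (bD1 1) (bH1 0) (bD1 0) (bH2 0) (bD2 0)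
    (hp1 0 (by norm_num)) (ht1 0 (by norm_num)) m1_0
    (by rw [eD1]; exact hp2 0 (by norm_num)) (by rw [eD1, eH1]; exact ht2 0 (by norm_num)) m2_0
  obtain ⟨eH0, eD0, _⟩ := d0
  constructor
  · intro y hy
    interval_cases y
    · exact eD0
    · exact eD1
    · exact eD2
    · exact eD3
    · exact eD4
    · exact eD5
    · exact eD6
    · exact hD7
    · rw [h18, h28]
  · intro y hy
    interval_cases y
    · exact eH0
    · exact eH1
    · exact eH2
    · exact eH3
    · exact eH4
    · exact eH5
    · exact eH6
    · exact hH7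

lemma Dm_bot (hC : DominoTatami (grid 8 8) C) : DmM (Mrel C) 0 = 0 := by
  apply mask8_zero
  intro i
  exact ind_not (mrel_out hC (by rw [mem_grid]; push_neg; intro h1 h2; omega))

lemma Dm_top (hC : DominoTatami (grid 8 8) C) : DmM (Mrel C) 8 = 0 := by
  apply mask8_zero
  intro i
  exact ind_not (mrel_out' hC (by rw [mem_grid]; push_neg; intro h1 h2; omega))

lemma mask8_congr {e e' : ℕ → ℕ} (h : ∀ i, e i = e' i) : mask8 e = mask8 e' := by
  unfold mask8; rw [h 0, h 1, h 2, h 3, h 4, h 5, h 6, h 7]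

lemma mask7_congr {e e' : ℕ → ℕ} (h : ∀ i, e i = e' i) : mask7 e = mask7 e' := by
  unfold mask7; rw [h 0, h 1, h 2, h 3, h 4, h 5, h 6]

/-- mask equality transfers the matching relation -/
lemma transfer {A B : Finset (Finset (ℤ × ℤ))}
    (hA : DominoTatami (grid 8 8) A) (hB : DominoTatami (grid 8 8) B)
    (hD : ∀ y : ℕ, y ≤ 8 → DmM (Mrel A) y = DmM (Mrel B) y)
    (hH : ∀ y : ℕ, y ≤ 7 → HmM (Mrel A) y = HmM (Mrel B) y)
    {a b : ℤ × ℤ} (h : Mrel A a b) : Mrel B a b := by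
  obtain ⟨hm, hadj, hag, hbg⟩ := mrel_pair hA h
  obtain ⟨ax, ay⟩ := a
  obtain ⟨bx, by'⟩ := b
  rw [mem_grid] at hag hbg
  simp only at hag hbg
  rcases adj_cases' hadj with ⟨e1, e2⟩ | ⟨e1, e2⟩ | ⟨e1, e2⟩ | ⟨e1, e2⟩ <;>
      rw [e1, e2] at h ⊢
  · -- right
    set x := ax.toNat with hxdef
    set y := ay.toNat with hydef
    have hx : ((x:ℕ):ℤ) = ax := Int.toNat_of_nonneg hag.1
    have hy : ((y:ℕ):ℤ) = ay := Int.toNat_of_nonneg hag.2.2.1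
    have hx7 : x < 7 := by omega
    have h1 : bitd (HmM (Mrel A) (y:ℤ)) x = 1 := by
      rw [HmM_bitd _ _ hx7]
      exact ind_of (by rw [hx, hy]; exact h)
    rw [hH y (by omega)] at h1
    rw [HmM_bitd _ _ hx7] at h1
    have h2 : Mrel B ((x:ℤ), (y:ℤ)) ((x:ℤ)+1, (y:ℤ)) := by
      by_contra hcon
      rw [ind_not hcon] at h1
      omega
    rwa [hx, hy] at h2
  · -- left : use symmetric horizontal fact at (ax-1, ay)
    have h' := mrel_symm h
    set x := (ax-1).toNat with hxdef
    set y := ay.toNat with hydef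
    have hx : ((x:ℕ):ℤ) = ax - 1 := Int.toNat_of_nonneg (by omega)
    have hy : ((y:ℕ):ℤ) = ay := Int.toNat_of_nonneg hag.2.2.1
    have hx7 : x < 7 := by omega
    have hco : ((x:ℤ)+1) = ax := by omega
    have h1 : bitd (HmM (Mrel A) (y:ℤ)) x = 1 := by
      rw [HmM_bitd _ _ hx7]
      exact ind_of (by rw [hco, hx, hy]; exact h')
    rw [hH y (by omega)] at h1
    rw [HmM_bitd _ _ hx7] at h1
    have h2 : Mrel B ((x:ℤ), (y:ℤ)) ((x:ℤ)+1, (y:ℤ)) := by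
      by_contra hcon
      rw [ind_not hcon] at h1
      omega
    rw [hco, hx, hy] at h2
    exact mrel_symm h2
  · -- up : vertical fact at level y+1
    have h' := mrel_symm h
    set x := ax.toNat with hxdef
    set y := ay.toNat with hydef
    have hx : ((x:ℕ):ℤ) = ax := Int.toNat_of_nonneg hag.1
    have hy : ((y:ℕ):ℤ) = ay := Int.toNat_of_nonneg hag.2.2.1
    have hx8 : x < 8 := by omega
    have hcast : (((y+1:ℕ)):ℤ) = (y:ℤ)+1 := by push_cast; ring
    have h1 : bitd (DmM (Mrel A) ((y+1 : ℕ):ℤ)) x = 1 := by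
      rw [DmM_bitd _ _ hx8]
      refine ind_of ?_
      rw [hcast, show (y:ℤ)+1-1 = (y:ℤ) from by ring, hx, hy]
      exact h'
    rw [hD (y+1) (by omega)] at h1
    rw [DmM_bitd _ _ hx8] at h1
    have h2 : Mrel B ((x:ℤ), ((y+1:ℕ):ℤ)) ((x:ℤ), ((y+1:ℕ):ℤ)-1) := by
      by_contra hcon
      rw [ind_not hcon] at h1
      omega
    rw [hcast, show (y:ℤ)+1-1 = (y:ℤ) from by ring, hx, hy] at h2
    exact mrel_symm h2
  · -- down : vertical fact at level y
    set x := ax.toNat with hxdef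
    set y := ay.toNat with hydef
    have hx : ((x:ℕ):ℤ) = ax := Int.toNat_of_nonneg hag.1
    have hy : ((y:ℕ):ℤ) = ay := Int.toNat_of_nonneg hag.2.2.1
    have hx8 : x < 8 := by omega
    have h1 : bitd (DmM (Mrel A) ((y:ℕ):ℤ)) x = 1 := by
      rw [DmM_bitd _ _ hx8]
      exact ind_of (by rw [hx, hy]; exact h)
    rw [hD y (by omega)] at h1
    rw [DmM_bitd _ _ hx8] at h1
    have h2 : Mrel B ((x:ℤ), ((y:ℕ):ℤ)) ((x:ℤ), ((y:ℕ):ℤ)-1) := by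
      by_contra hcon
      rw [ind_not hcon] at h1
      omega
    rwa [hx, hy] at h2

end TatamiAux

open TatamiAux in
/-- Two domino tatami coverings of the 8×8 grid agreeing on all dominoes
    meeting the top row (cells with second coordinate 7) are equal. -/
theorem stmt2 (C₁ C₂ : Finset (Finset (ℤ × ℤ)))
    (h₁ : DominoTatami (grid 8 8) C₁) (h₂ : DominoTatami (grid 8 8) C₂)
    (htop : C₁.filter (fun d => ∃ c ∈ d, c.2 = (7 : ℤ)) =
            C₂.filter (fun d => ∃ c ∈ d, c.2 = (7 : ℤ))) :
    C₁ = C₂ := by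
  classical
  have htop' : ∀ a b : ℤ × ℤ, a.2 = 7 → (Mrel C₁ a b ↔ Mrel C₂ a b) := by
    intro a b h7
    constructor
    · intro h
      obtain ⟨hm, hadj, hag, hbg⟩ := mrel_pair h₁ h
      have hmem : {a, b} ∈ C₁.filter (fun d => ∃ c ∈ d, c.2 = (7:ℤ)) :=
        Finset.mem_filter.mpr ⟨hm, ⟨a, by simp, h7⟩⟩
      rw [htop] at hmem
      exact ⟨h.1, {a, b}, (Finset.mem_filter.mp hmem).1, by simp, by simp⟩
    · intro h
      obtain ⟨hm, hadj, hag, hbg⟩ := mrel_pair h₂ h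
      have hmem : {a, b} ∈ C₂.filter (fun d => ∃ c ∈ d, c.2 = (7:ℤ)) :=
        Finset.mem_filter.mpr ⟨hm, ⟨a, by simp, h7⟩⟩
      rw [← htop] at hmem
      exact ⟨h.1, {a, b}, (Finset.mem_filter.mp hmem).1, by simp, by simp⟩
  -- engine
  have main := engine (fun n => DmM (Mrel C₁) (n:ℤ)) (fun n => HmM (Mrel C₁) (n:ℤ))
      (fun n => DmM (Mrel C₂) (n:ℤ)) (fun n => HmM (Mrel C₂) (n:ℤ))
      (fun y => DmM_lt _ _) (fun y => HmM_lt _ _) (fun y => DmM_lt _ _) (fun y => HmM_lt _ _)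
      (by intro y hy; push_cast; exact row_pB h₁ ⟨by omega, by omega⟩)
      (by intro y hy; push_cast; exact row_tB h₁ ⟨by omega, by omega⟩)
      (by intro y hy; push_cast; exact row_pB h₂ ⟨by omega, by omega⟩)
      (by intro y hy; push_cast; exact row_tB h₂ ⟨by omega, by omega⟩)
      (by push_cast; exact Dm_bot h₁)
      (by push_cast; exact Dm_bot h₂)
      (by push_cast; exact Dm_top h₁)
      (by push_cast; exact Dm_top h₂)
      (by exact mask7_congr (fun i => ind_congr (htop' _ _ (by norm_num))))
      (by exact mask8_congr (fun i => ind_congr (htop' _ _ (by norm_num))))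
  obtain ⟨eqD, eqH⟩ := main
  have key12 : ∀ a b : ℤ × ℤ, Mrel C₁ a b → Mrel C₂ a b :=
    fun a b h => transfer h₁ h₂ (fun y hy => eqD y hy) (fun y hy => eqH y hy) h
  have key21 : ∀ a b : ℤ × ℤ, Mrel C₂ a b → Mrel C₁ a b :=
    fun a b h => transfer h₂ h₁ (fun y hy => (eqD y hy).symm) (fun y hy => (eqH y hy).symm) h
  ext d
  constructor
  · intro hd
    obtain ⟨p, q, hpq, rfl⟩ := h₁.2.1 d hd
    have hM : Mrel C₁ p q := ⟨adj_ne hpq, {p, q}, hd, by simp, by simp⟩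
    exact (mrel_pair h₂ (key12 p q hM)).1
  · intro hd
    obtain ⟨p, q, hpq, rfl⟩ := h₂.2.1 d hd
    have hM : Mrel C₂ p q := ⟨adj_ne hpq, {p, q}, hd, by simp, by simp⟩
    exact (mrel_pair h₁ (key21 p q hM)).1
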